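/- (Closed-form solution of the one-time episodic optimization.) Let d ≥ 1, let Ā be a symmetric positive semidefinite d×d real matrix, let V_0 be a symmetric positive definite d×d real matrix, let m̄, m_0 ∈ ℝ^d, and let n_0 > 0. Define, for m ∈ ℝ^d and V a symmetric positive definite d×d matrix, F(m, V) = (1/2)(m − m̄)ᵀ Ā (m − m̄) + (1/2) Tr(Ā V) − (1/2) log det V + (n_0/2)(m − m_0)ᵀ V_0^{-1} (m − m_0) + (n_0/2) Tr(V V_0^{-1}). Then F attains its global minimum over all m ∈ ℝ^d and all symmetric positive definite V at the unique point m* = (Ā + n_0 V_0^{-1})^{-1} (Ā m̄ + n_0 V_0^{-1} m_0), V* = (Ā + n_0 V_0^{-1})^{-1}; that is, F(m, V) ≥ F(m*, V*) for all such (m, V), with equality if and only if (m, V) = (m*, V*). -/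

import Mathlib

/-!
STATEMENT 4 (Closed-form solution of the one-time episodic optimization).
For Ā symmetric positive semidefinite, V₀ symmetric positive definite, m̄, m₀ ∈ ℝ^d, n₀ > 0,
the objective
  F(m,V) = (1/2)(m−m̄)ᵀĀ(m−m̄) + (1/2)Tr(ĀV) − (1/2)log det V
           + (n₀/2)(m−m₀)ᵀV₀⁻¹(m−m₀) + (n₀/2)Tr(V V₀⁻¹)
attains its global minimum over m ∈ ℝ^d and symmetric positive definite V at the unique point
  m* = (Ā + n₀V₀⁻¹)⁻¹(Ā m̄ + n₀V₀⁻¹ m₀),  V* = (Ā + n₀V₀⁻¹)⁻¹,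
i.e. F(m,V) ≥ F(m*,V*) with equality iff (m,V) = (m*,V*).
-/

open Matrix Real

/-- The per-episode variational objective `F(m, V)`. -/
noncomputable def episodicObjective (d : ℕ) (Abar V0 : Matrix (Fin d) (Fin d) ℝ)
    (mbar m0 : Fin d → ℝ) (n0 : ℝ) (m : Fin d → ℝ) (V : Matrix (Fin d) (Fin d) ℝ) : ℝ :=
  (1 / 2) * ((m - mbar) ⬝ᵥ Abar.mulVec (m - mbar)) + (1 / 2) * (Abar * V).trace
    - (1 / 2) * Real.log V.det
    + (n0 / 2) * ((m - m0) ⬝ᵥ V0⁻¹.mulVec (m - m0)) + (n0 / 2) * (V * V0⁻¹).trace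

/-!
With `S = Ā + n₀ V₀⁻¹` and `m* = S⁻¹ (Ā m̄ + n₀ V₀⁻¹ m₀)`, the objective splits as
`F(m, V) = F(m*, S⁻¹) + ½ (m - m*)ᵀ S (m - m*) + ½ (tr (S V) - log det V - d - log det S)`:
the quadratic part is a completed square because `S m* = Ā m̄ + n₀ V₀⁻¹ m₀`, and the
`V`-part equals `tr W - log det W - d` for the positive definite `W = S^{1/2} V S^{1/2}`, i.e. the
sum of `λ - log λ - 1 ≥ 0` over the eigenvalues of `W`, which vanishes only when `W = 1`.
-/

lemma Real.sub_log_sub_one_nonneg {x : ℝ} (hx : 0 < x) : 0 ≤ x - log x - 1 := by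
  linarith [log_le_sub_one_of_pos hx]

lemma Real.sub_log_sub_one_eq_zero_iff {x : ℝ} (hx : 0 < x) : x - log x - 1 = 0 ↔ x = 1 := by
  refine ⟨fun h => ?_, fun h => by simp [h]⟩
  by_contra hx1
  linarith [log_lt_sub_one_of_pos hx hx1]

open scoped MatrixOrder ComplexOrder

namespace Matrix

variable {n : Type*} [Fintype n]

lemma IsSymm.dotProduct_mulVec_comm {R : Type*} [CommSemiring R] {A : Matrix n n R}
    (hA : A.IsSymm) (x y : n → R) : x ⬝ᵥ A *ᵥ y = y ⬝ᵥ A *ᵥ x := by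
  rw [dotProduct_mulVec, ← mulVec_transpose, hA.eq, dotProduct_comm]

lemma IsSymm.add_dotProduct_mulVec_add {R : Type*} [CommSemiring R] {A : Matrix n n R}
    (hA : A.IsSymm) (x y : n → R) :
    (x + y) ⬝ᵥ A *ᵥ (x + y) = x ⬝ᵥ A *ᵥ x + 2 * (x ⬝ᵥ A *ᵥ y) + y ⬝ᵥ A *ᵥ y := by
  rw [mulVec_add, add_dotProduct, dotProduct_add, dotProduct_add, hA.dotProduct_mulVec_comm y x]
  ring

lemma PosDef.dotProduct_mulVec_self_eq_zero_iff {M : Matrix n n ℝ} (hM : M.PosDef) (x : n → ℝ) :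
    x ⬝ᵥ M *ᵥ x = 0 ↔ x = 0 := by
  refine ⟨fun h => ?_, by rintro rfl; simp⟩
  by_contra hx
  simpa [h] using hM.dotProduct_mulVec_pos hx

variable [DecidableEq n]

lemma PosDef.exists_posDef_mul_self {𝕜 : Type*} [RCLike 𝕜] {S : Matrix n n 𝕜} (hS : S.PosDef) :
    ∃ Q : Matrix n n 𝕜, Q.PosDef ∧ Q * Q = S :=
  ⟨CFC.sqrt S, hS.isStrictlyPositive.sqrt.posDef, CFC.sqrt_mul_sqrt_self S hS.posSemidef.nonneg⟩

lemma PosDef.trace_sub_log_det_sub_card_eq_sum {W : Matrix n n ℝ} (hW : W.PosDef) :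
    W.trace - log W.det - Fintype.card n =
      ∑ i, (hW.isHermitian.eigenvalues i - log (hW.isHermitian.eigenvalues i) - 1) := by
  rw [hW.isHermitian.trace_eq_sum_eigenvalues, hW.isHermitian.det_eq_prod_eigenvalues,
    RCLike.ofReal_real_eq_id]
  simp [log_prod fun i _ => (hW.eigenvalues_pos i).ne', Finset.sum_sub_distrib]

lemma PosDef.card_le_trace_sub_log_det {W : Matrix n n ℝ} (hW : W.PosDef) :
    (Fintype.card n : ℝ) ≤ W.trace - log W.det := by
  have hsum := hW.trace_sub_log_det_sub_card_eq_sum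
  have : 0 ≤ ∑ i, (hW.isHermitian.eigenvalues i - log (hW.isHermitian.eigenvalues i) - 1) :=
    Finset.sum_nonneg fun i _ => sub_log_sub_one_nonneg (hW.eigenvalues_pos i)
  linarith

lemma PosDef.trace_sub_log_det_eq_card_iff {W : Matrix n n ℝ} (hW : W.PosDef) :
    W.trace - log W.det = Fintype.card n ↔ W = 1 := by
  refine ⟨fun h => ?_, by rintro rfl; simp⟩
  have hsum := hW.trace_sub_log_det_sub_card_eq_sum
  rw [h, sub_self, eq_comm, Finset.sum_eq_zero_iff_of_nonneg
    fun i _ => sub_log_sub_one_nonneg (hW.eigenvalues_pos i)] at hsum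
  refine CFC.eq_one_of_spectrum_subset_one (R := ℝ) W ?_ hW.isHermitian
  rw [hW.isHermitian.spectrum_real_eq_range_eigenvalues]
  rintro _ ⟨i, rfl⟩
  exact (sub_log_sub_one_eq_zero_iff (hW.eigenvalues_pos i)).mp (hsum i (Finset.mem_univ i))

lemma PosDef.exists_trace_mul_sub_log_det_sub_log_det_eq {S V : Matrix n n ℝ} (hS : S.PosDef)
    (hV : V.PosDef) :
    ∃ W : Matrix n n ℝ, W.PosDef ∧ (W = 1 ↔ V = S⁻¹) ∧
      (S * V).trace - log V.det - log S.det = W.trace - log W.det := by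
  obtain ⟨Q, hQ, rfl⟩ := hS.exists_posDef_mul_self
  have hQu : IsUnit Q := hQ.isUnit
  refine ⟨Q * V * Q, ?_, ?_, ?_⟩
  · simpa only [hQ.isHermitian.eq] using
      hV.conjTranspose_mul_mul_same (mulVec_injective_iff_isUnit.mpr hQu)
  · have hQd : IsUnit Q.det := (isUnit_iff_isUnit_det Q).mp hQu
    rw [Matrix.mul_inv_rev]
    constructor
    · intro h
      calc V = Q⁻¹ * (Q * V * Q) * Q⁻¹ := by
            simp [Matrix.mul_assoc, mul_nonsing_inv Q hQd, nonsing_inv_mul_cancel_left _ _ hQd]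
        _ = Q⁻¹ * Q⁻¹ := by rw [h, Matrix.mul_one]
    · rintro rfl
      simp [nonsing_inv_mul Q hQd, mul_nonsing_inv_cancel_left _ _ hQd]
  · have hQd := hQ.det_pos.ne'
    have hVd := hV.det_pos.ne'
    rw [trace_mul_cycle Q V Q, det_mul, det_mul, det_mul, log_mul hQd hQd,
      log_mul (mul_ne_zero hQd hVd) hQd, log_mul hQd hVd]
    ring

lemma PosDef.card_add_log_det_le_trace_mul_sub_log_det {S V : Matrix n n ℝ} (hS : S.PosDef)
    (hV : V.PosDef) : Fintype.card n + log S.det ≤ (S * V).trace - log V.det := by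
  obtain ⟨W, hW, -, hSV⟩ := hS.exists_trace_mul_sub_log_det_sub_log_det_eq hV
  linarith [hW.card_le_trace_sub_log_det]

lemma PosDef.trace_mul_sub_log_det_eq_iff {S V : Matrix n n ℝ} (hS : S.PosDef) (hV : V.PosDef) :
    (S * V).trace - log V.det = Fintype.card n + log S.det ↔ V = S⁻¹ := by
  obtain ⟨W, hW, hW_eq_one, hSV⟩ := hS.exists_trace_mul_sub_log_det_sub_log_det_eq hV
  rw [← hW_eq_one, ← hW.trace_sub_log_det_eq_card_iff]
  constructor <;> intro h <;> linarith

end Matrix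

theorem episodicObjective_eq_add {d : ℕ} {Abar V0 : Matrix (Fin d) (Fin d) ℝ}
    {mbar m0 μ : Fin d → ℝ} {n0 : ℝ} (hAbar : Abar.IsSymm) (hV0 : V0⁻¹.IsSymm) (hS_det : IsUnit (Abar + n0 • V0⁻¹).det)
    (hμ : (Abar + n0 • V0⁻¹) *ᵥ μ = Abar *ᵥ mbar + n0 • V0⁻¹ *ᵥ m0)
    (m : Fin d → ℝ) (V : Matrix (Fin d) (Fin d) ℝ) :
    episodicObjective d Abar V0 mbar m0 n0 m V =
      episodicObjective d Abar V0 mbar m0 n0 μ (Abar + n0 • V0⁻¹)⁻¹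
        + (1 / 2) * ((m - μ) ⬝ᵥ (Abar + n0 • V0⁻¹) *ᵥ (m - μ))
        + (1 / 2) * (((Abar + n0 • V0⁻¹) * V).trace - log V.det
          - (d + log (Abar + n0 • V0⁻¹).det)) := by
  set S := Abar + n0 • V0⁻¹
  have htrace (V : Matrix (Fin d) (Fin d) ℝ) :
      (S * V).trace = (Abar * V).trace + n0 * (V * V0⁻¹).trace := by
    rw [add_mul, trace_add, smul_mul, trace_smul, trace_mul_comm V0⁻¹ V, smul_eq_mul]
  have hnormal : Abar *ᵥ (μ - mbar) + n0 • V0⁻¹ *ᵥ (μ - m0) = 0 := by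
    rw [mulVec_sub, mulVec_sub, smul_sub, ← sub_eq_zero.mpr hμ, add_mulVec, smul_mulVec]
    abel
  have hcross : (m - μ) ⬝ᵥ Abar *ᵥ (μ - mbar) + n0 * ((m - μ) ⬝ᵥ V0⁻¹ *ᵥ (μ - m0)) = 0 := by
    simpa [dotProduct_add, dotProduct_smul] using congrArg ((m - μ) ⬝ᵥ ·) hnormal
  have hA := hAbar.add_dotProduct_mulVec_add (m - μ) (μ - mbar)
  have hB := hV0.add_dotProduct_mulVec_add (m - μ) (μ - m0)
  rw [sub_add_sub_cancel] at hA hB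
  have hquad : (m - μ) ⬝ᵥ S *ᵥ (m - μ)
      = (m - μ) ⬝ᵥ Abar *ᵥ (m - μ) + n0 * ((m - μ) ⬝ᵥ V0⁻¹ *ᵥ (m - μ)) := by
    rw [add_mulVec, smul_mulVec, dotProduct_add, dotProduct_smul, smul_eq_mul]
  have hSS : (S * S⁻¹).trace = d := by simp [mul_nonsing_inv S hS_det]
  have hdet : log S⁻¹.det = - log S.det := by
    rw [det_nonsing_inv, Ring.inverse_eq_inv', log_inv]
  unfold episodicObjective
  linear_combination (1 / 2) * hA + (n0 / 2) * hB + hcross - (1 / 2) * hquad - (1 / 2) * hSS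
    + (1 / 2) * hdet - (1 / 2) * htrace V + (1 / 2) * htrace S⁻¹

theorem one_time_episodic_optimization_closed_form_general
    (d : ℕ)
    (Abar : Matrix (Fin d) (Fin d) ℝ) (hAbar : Abar.PosSemidef)
    (V0 : Matrix (Fin d) (Fin d) ℝ) (hV0 : V0.PosDef)
    (mbar m0 : Fin d → ℝ) (n0 : ℝ) (hn0 : 0 < n0) :
    ((Abar + n0 • V0⁻¹)⁻¹).PosDef ∧
    (∀ (m : Fin d → ℝ) (V : Matrix (Fin d) (Fin d) ℝ), V.PosDef →
      episodicObjective d Abar V0 mbar m0 n0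
          ((Abar + n0 • V0⁻¹)⁻¹.mulVec (Abar.mulVec mbar + n0 • V0⁻¹.mulVec m0))
          (Abar + n0 • V0⁻¹)⁻¹
        ≤ episodicObjective d Abar V0 mbar m0 n0 m V) ∧
    (∀ (m : Fin d → ℝ) (V : Matrix (Fin d) (Fin d) ℝ), V.PosDef →
      (episodicObjective d Abar V0 mbar m0 n0 m V
          = episodicObjective d Abar V0 mbar m0 n0
              ((Abar + n0 • V0⁻¹)⁻¹.mulVec (Abar.mulVec mbar + n0 • V0⁻¹.mulVec m0))
              (Abar + n0 • V0⁻¹)⁻¹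
        ↔ m = (Abar + n0 • V0⁻¹)⁻¹.mulVec (Abar.mulVec mbar + n0 • V0⁻¹.mulVec m0)
            ∧ V = (Abar + n0 • V0⁻¹)⁻¹)) := by
  set S := Abar + n0 • V0⁻¹
  set μ := S⁻¹ *ᵥ (Abar *ᵥ mbar + n0 • V0⁻¹ *ᵥ m0)
  have hS : S.PosDef := PosDef.posSemidef_add hAbar (hV0.inv.smul hn0)
  have hμ : S *ᵥ μ = Abar *ᵥ mbar + n0 • V0⁻¹ *ᵥ m0 := by
    rw [mulVec_mulVec, mul_nonsing_inv S hS.det_pos.ne'.isUnit, one_mulVec]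
  have hF := episodicObjective_eq_add (isHermitian_iff_isSymm.mp hAbar.isHermitian)
    (isHermitian_iff_isSymm.mp hV0.inv.isHermitian) hS.det_pos.ne'.isUnit hμ
  have hq m : 0 ≤ (m - μ) ⬝ᵥ S *ᵥ (m - μ) := by
    simpa using hS.posSemidef.dotProduct_mulVec_nonneg (m - μ)
  have hv {V : Matrix (Fin d) (Fin d) ℝ} (hV : V.PosDef) :
      0 ≤ (S * V).trace - log V.det - (d + log S.det) := by
    simpa using hS.card_add_log_det_le_trace_mul_sub_log_det hV
  refine ⟨hS.inv, fun m V hV => ?_, fun m V hV => ?_⟩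
  · rw [hF m V]
    linarith [hq m, hv hV]
  · have hq_eq : (m - μ) ⬝ᵥ S *ᵥ (m - μ) = 0 ↔ m = μ := by
      rw [hS.dotProduct_mulVec_self_eq_zero_iff, sub_eq_zero]
    have hv_eq : (S * V).trace - log V.det - (d + log S.det) = 0 ↔ V = S⁻¹ := by
      rw [sub_eq_zero, ← hS.trace_mul_sub_log_det_eq_iff hV, Fintype.card_fin]
    rw [hF m V, ← hq_eq, ← hv_eq]
    constructor
    · intro h
      constructor <;> linarith [hq m, hv hV]
    · rintro ⟨h₁, h₂⟩
      rw [h₁, h₂]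
      ring

theorem one_time_episodic_optimization_closed_form
    (d : ℕ) (hd : 1 ≤ d)
    (Abar : Matrix (Fin d) (Fin d) ℝ) (hAbar : Abar.PosSemidef)
    (V0 : Matrix (Fin d) (Fin d) ℝ) (hV0 : V0.PosDef)
    (mbar m0 : Fin d → ℝ) (n0 : ℝ) (hn0 : 0 < n0) :
    ((Abar + n0 • V0⁻¹)⁻¹).PosDef ∧
    (∀ (m : Fin d → ℝ) (V : Matrix (Fin d) (Fin d) ℝ), V.PosDef →
      episodicObjective d Abar V0 mbar m0 n0
          ((Abar + n0 • V0⁻¹)⁻¹.mulVec (Abar.mulVec mbar + n0 • V0⁻¹.mulVec m0))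
          (Abar + n0 • V0⁻¹)⁻¹
        ≤ episodicObjective d Abar V0 mbar m0 n0 m V) ∧
    (∀ (m : Fin d → ℝ) (V : Matrix (Fin d) (Fin d) ℝ), V.PosDef →
      (episodicObjective d Abar V0 mbar m0 n0 m V
          = episodicObjective d Abar V0 mbar m0 n0
              ((Abar + n0 • V0⁻¹)⁻¹.mulVec (Abar.mulVec mbar + n0 • V0⁻¹.mulVec m0))
              (Abar + n0 • V0⁻¹)⁻¹
        ↔ m = (Abar + n0 • V0⁻¹)⁻¹.mulVec (Abar.mulVec mbar + n0 • V0⁻¹.mulVec m0)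
            ∧ V = (Abar + n0 • V0⁻¹)⁻¹)) :=
  one_time_episodic_optimization_closed_form_general d Abar hAbar V0 hV0 mbar m0 n0 hn0
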